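/- arXiv:2303.00367 — 4 statements merged into one kernel-verified Lean document; each statement's English description precedes it below -/
import Mathlib

section
/- Let u_h, v_h ∈ V_h. Then there is a constant C > 0, independent of u_h, v_h and h, such that the quadrature error satisfies |δ_h(u_h, v_h)| ≤ C h ‖∂_y u_h‖ ‖∂_y v_h‖, where ‖·‖ denotes the L²(0,Λ) norm. (Lemma 1, first estimate.) -/
/-!
On a cell `[y, y + h]` on which `u = u(y) + a (· - y)` and `v = v(y) + c (· - y)`, the
left-endpoint rule misses `∫ u v` by exactly `h²/2 (a v(y) + c u(y)) + h³/3 a c`. Since `u`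
vanishes at `Λ`, every nodal value of `u` is bounded by its discrete total variation
`h ∑ |a_k|`, which Cauchy–Schwarz bounds by `√Λ ‖u'‖`. Summing the cell errors gives
`|δ_h(u, v)| ≤ (4/3) Λ h ‖u'‖ ‖v'‖`.
-/

open MeasureTheory Set

noncomputable section

/-- `v` belongs to the finite element space `V_h`: continuous on `[0,Λ]`,
affine on each subinterval `[y_j, y_{j+1}]` of the uniform partition with `N`
cells, and vanishing at `Λ`. -/
def IsVh (Λ : ℝ) (N : ℕ) (v : ℝ → ℝ) : Prop :=
  ContinuousOn v (Set.Icc 0 Λ) ∧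
  (∀ j : ℕ, j < N →
    ∃ a b : ℝ, ∀ y ∈ Set.Icc ((j : ℝ) * (Λ / N)) (((j : ℝ) + 1) * (Λ / N)),
      v y = a * y + b) ∧
  v Λ = 0

/-- The discrete inner product `(u,v)_h = h ∑_{j=1}^{N} u(y_j) v(y_j)`,
where `y_j = (j-1) h` and `h = Λ / N`. -/
def dInner (Λ : ℝ) (N : ℕ) (u v : ℝ → ℝ) : ℝ :=
  (Λ / N) * ∑ j ∈ Finset.range N, u ((j : ℝ) * (Λ / N)) * v ((j : ℝ) * (Λ / N))


section LeftRectangleRule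

lemma abs_le_sum_abs_sub_of_eq_zero {x : ℕ → ℝ} {N j : ℕ} (hx : x N = 0) (hj : j ≤ N) :
    |x j| ≤ ∑ k ∈ Finset.range N, |x (k + 1) - x k| := by
  have htelescope : x j = -∑ k ∈ Finset.Ico j N, (x (k + 1) - x k) := by
    rw [Finset.sum_Ico_sub x hj, hx, zero_sub, neg_neg]
  calc |x j| ≤ ∑ k ∈ Finset.Ico j N, |x (k + 1) - x k| := by
        rw [htelescope, abs_neg]
        exact Finset.abs_sum_le_sum_abs _ _
    _ ≤ ∑ k ∈ Finset.range N, |x (k + 1) - x k| := by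
        rw [Finset.range_eq_Ico]
        exact Finset.sum_le_sum_of_subset_of_nonneg (Finset.Ico_subset_Ico_left j.zero_le)
          fun _ _ _ => abs_nonneg _

lemma abs_sum_left_rule_error_le {x z : ℕ → ℝ} {N : ℕ} {h : ℝ} (hh : 0 ≤ h)
    (hx : x N = 0) (hz : z N = 0) :
    |∑ j ∈ Finset.range N, (h / 2 * ((x (j + 1) - x j) * z j + (z (j + 1) - z j) * x j)
        + h / 3 * ((x (j + 1) - x j) * (z (j + 1) - z j)))|
      ≤ 4 / 3 * h * (∑ j ∈ Finset.range N, |x (j + 1) - x j|) *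
        ∑ j ∈ Finset.range N, |z (j + 1) - z j| := by
  set Dx := ∑ j ∈ Finset.range N, |x (j + 1) - x j|
  set Dz := ∑ j ∈ Finset.range N, |z (j + 1) - z j|
  have hterm : ∀ j ∈ Finset.range N,
      |h / 2 * ((x (j + 1) - x j) * z j + (z (j + 1) - z j) * x j)
        + h / 3 * ((x (j + 1) - x j) * (z (j + 1) - z j))|
      ≤ 5 / 6 * h * Dz * |x (j + 1) - x j| + h / 2 * Dx * |z (j + 1) - z j| := by
    intro j hj
    have hxj := abs_le_sum_abs_sub_of_eq_zero hx (Finset.mem_range.mp hj).le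
    have hzj := abs_le_sum_abs_sub_of_eq_zero hz (Finset.mem_range.mp hj).le
    have hdz : |z (j + 1) - z j| ≤ Dz :=
      Finset.single_le_sum (f := fun k => |z (k + 1) - z k|) (fun _ _ => abs_nonneg _) hj
    calc _ ≤ h / 2 * (|x (j + 1) - x j| * |z j| + |z (j + 1) - z j| * |x j|)
          + h / 3 * (|x (j + 1) - x j| * |z (j + 1) - z j|) := by
          refine (abs_add_le _ _).trans (add_le_add ?_ ?_)
          · rw [abs_mul (h / 2), abs_of_nonneg (by positivity : 0 ≤ h / 2), ← abs_mul, ← abs_mul]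
            gcongr
            exact abs_add_le _ _
          · rw [abs_mul, abs_of_nonneg (by positivity : 0 ≤ h / 3), abs_mul]
      _ ≤ h / 2 * (|x (j + 1) - x j| * Dz + |z (j + 1) - z j| * Dx)
          + h / 3 * (|x (j + 1) - x j| * Dz) := by gcongr
      _ = _ := by ring
  calc _ ≤ ∑ j ∈ Finset.range N, (5 / 6 * h * Dz * |x (j + 1) - x j|
          + h / 2 * Dx * |z (j + 1) - z j|) :=
        (Finset.abs_sum_le_sum_abs _ _).trans (Finset.sum_le_sum hterm)
    _ = 4 / 3 * h * Dx * Dz := by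
        rw [Finset.sum_add_distrib, ← Finset.mul_sum, ← Finset.mul_sum]
        ring

lemma sum_abs_le_sqrt_mul_sqrt (w : ℕ → ℝ) (N : ℕ) {h : ℝ} (hh : 0 < h) :
    ∑ j ∈ Finset.range N, |w j| ≤ √(N * h) * √(∑ j ∈ Finset.range N, w j ^ 2 / h) := by
  have hcancel : (N : ℝ) * h * ((∑ j ∈ Finset.range N, w j ^ 2) / h)
      = N * ∑ j ∈ Finset.range N, w j ^ 2 := by
    field_simp
  rw [← Real.sqrt_mul (by positivity), ← Finset.sum_div, hcancel]
  refine Real.le_sqrt_of_sq_le ?_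
  simpa [sq_abs] using sq_sum_le_card_mul_sum_sq (s := Finset.range N) (f := fun j => |w j|)

end LeftRectangleRule

section AffineCell

variable {f g : ℝ → ℝ} {s t a b c d : ℝ}

lemma deriv_eq_of_eq_affine (hf : ∀ y ∈ Icc s t, f y = a * y + b) {y : ℝ} (hy : y ∈ Ioo s t) :
    deriv f y = a := by
  have hloc : f =ᶠ[nhds y] fun y => a * y + b :=
    Filter.eventually_of_mem (Ioo_mem_nhds hy.1 hy.2) fun z hz => hf z (Ioo_subset_Icc_self hz)
  rw [hloc.deriv_eq]
  simp

lemma intervalIntegrable_deriv_sq_of_eq_affine (hf : ∀ y ∈ Icc s t, f y = a * y + b)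
    (hst : s ≤ t) : IntervalIntegrable (fun y => deriv f y ^ 2) volume s t :=
  intervalIntegrable_const.congr_uIoo fun y hy => by
    rw [uIoo_of_le hst] at hy
    rw [deriv_eq_of_eq_affine hf hy]

lemma integral_deriv_sq_of_eq_affine (hf : ∀ y ∈ Icc s t, f y = a * y + b) (hst : s ≤ t) :
    ∫ y in s..t, deriv f y ^ 2 = (f t - f s) ^ 2 / (t - s) := by
  rw [intervalIntegral.integral_congr_Ioo_of_le hst (g := fun _ => a ^ 2)
      fun y hy => by rw [deriv_eq_of_eq_affine hf hy],
    intervalIntegral.integral_const, smul_eq_mul, hf t ⟨hst, le_rfl⟩, hf s ⟨le_rfl, hst⟩]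
  rcases hst.eq_or_lt with rfl | hlt
  · simp
  · field_simp
    ring

lemma intervalIntegrable_mul_of_eq_affine (hf : ∀ y ∈ Icc s t, f y = a * y + b)
    (hg : ∀ y ∈ Icc s t, g y = c * y + d) (hst : s ≤ t) :
    IntervalIntegrable (fun y => f y * g y) volume s t := by
  have hcont : Continuous fun y : ℝ => (a * y + b) * (c * y + d) := by fun_prop
  refine (hcont.intervalIntegrable s t).congr fun y hy => ?_
  rw [uIoc_of_le hst] at hy
  simp only [hf y (Ioc_subset_Icc_self hy), hg y (Ioc_subset_Icc_self hy)]

lemma integral_mul_of_eq_affine (hf : ∀ y ∈ Icc s t, f y = a * y + b)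
    (hg : ∀ y ∈ Icc s t, g y = c * y + d) (hst : s ≤ t) :
    ∫ y in s..t, f y * g y = (t - s) * (f s * g s)
      + (t - s) / 2 * ((f t - f s) * g s + (g t - g s) * f s)
      + (t - s) / 3 * ((f t - f s) * (g t - g s)) := by
  have hprimitive : ∀ y, HasDerivAt
      (fun y => a * c / 3 * y ^ 3 + (a * d + b * c) / 2 * y ^ 2 + b * d * y)
      ((a * y + b) * (c * y + d)) y := fun y => by
    refine ((((hasDerivAt_pow 3 y).const_mul (a * c / 3)).add
      ((hasDerivAt_pow 2 y).const_mul ((a * d + b * c) / 2))).add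
      ((hasDerivAt_id y).const_mul (b * d))).congr_deriv ?_
    push_cast
    ring
  have hcont : Continuous fun y : ℝ => (a * y + b) * (c * y + d) := by fun_prop
  rw [intervalIntegral.integral_congr (g := fun y => (a * y + b) * (c * y + d)) fun y hy => by
      rw [uIcc_of_le hst] at hy
      simp only [hf y hy, hg y hy],
    intervalIntegral.integral_eq_sub_of_hasDerivAt (fun y _ => hprimitive y)
      (hcont.intervalIntegrable s t),
    hf s ⟨le_rfl, hst⟩, hf t ⟨hst, le_rfl⟩, hg s ⟨le_rfl, hst⟩, hg t ⟨hst, le_rfl⟩]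
  ring

end AffineCell

/-- The paper's node `y_{j+1} = j h` (indexed from `0` here). -/
def node (Λ : ℝ) (N j : ℕ) : ℝ := j * (Λ / N)

section FiniteElementSpace

variable {Λ : ℝ} {N : ℕ} {u v : ℝ → ℝ}

lemma node_zero : node Λ N 0 = 0 := by simp [node]

lemma node_self (hN : N ≠ 0) : node Λ N N = Λ := by
  simp only [node]
  field_simp

lemma node_succ_sub_node (j : ℕ) : node Λ N (j + 1) - node Λ N j = Λ / N := by
  simp only [node]
  push_cast
  ring

lemma node_le_node_succ (hΛ : 0 ≤ Λ) (j : ℕ) : node Λ N j ≤ node Λ N (j + 1) := by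
  linarith [node_succ_sub_node (Λ := Λ) (N := N) j, div_nonneg hΛ N.cast_nonneg]

lemma integral_eq_sum_integral_cells {f : ℝ → ℝ} (hN : N ≠ 0)
    (hf : ∀ j < N, IntervalIntegrable f volume (node Λ N j) (node Λ N (j + 1))) :
    ∫ y in (0 : ℝ)..Λ, f y = ∑ j ∈ Finset.range N, ∫ y in node Λ N j..node Λ N (j + 1), f y := by
  rw [intervalIntegral.sum_integral_adjacent_intervals hf, node_zero, node_self hN]

lemma IsVh.eq_affine_on_cell (hu : IsVh Λ N u) {j : ℕ} (hj : j < N) :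
    ∃ a b : ℝ, ∀ y ∈ Icc (node Λ N j) (node Λ N (j + 1)), u y = a * y + b := by
  simpa [node] using hu.2.1 j hj

lemma IsVh.node_self_eq_zero (hu : IsVh Λ N u) (hN : N ≠ 0) : u (node Λ N N) = 0 := by
  rw [node_self hN]
  exact hu.2.2

lemma IsVh.integral_deriv_sq (hu : IsVh Λ N u) (hΛ : 0 ≤ Λ) (hN : N ≠ 0) :
    ∫ y in (0 : ℝ)..Λ, deriv u y ^ 2
      = ∑ j ∈ Finset.range N, (u (node Λ N (j + 1)) - u (node Λ N j)) ^ 2 / (Λ / N) := by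
  rw [integral_eq_sum_integral_cells hN fun j hj => ?_]
  · refine Finset.sum_congr rfl fun j hj => ?_
    obtain ⟨a, b, hab⟩ := hu.eq_affine_on_cell (Finset.mem_range.mp hj)
    rw [integral_deriv_sq_of_eq_affine hab (node_le_node_succ hΛ j), node_succ_sub_node]
  · obtain ⟨a, b, hab⟩ := hu.eq_affine_on_cell hj
    exact intervalIntegrable_deriv_sq_of_eq_affine hab (node_le_node_succ hΛ j)

lemma IsVh.integral_mul (hu : IsVh Λ N u) (hv : IsVh Λ N v) (hΛ : 0 ≤ Λ) (hN : N ≠ 0) :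
    ∫ y in (0 : ℝ)..Λ, u y * v y = ∑ j ∈ Finset.range N,
      (Λ / N * (u (node Λ N j) * v (node Λ N j))
        + Λ / N / 2 * ((u (node Λ N (j + 1)) - u (node Λ N j)) * v (node Λ N j)
          + (v (node Λ N (j + 1)) - v (node Λ N j)) * u (node Λ N j))
        + Λ / N / 3 * ((u (node Λ N (j + 1)) - u (node Λ N j))
          * (v (node Λ N (j + 1)) - v (node Λ N j)))) := by
  rw [integral_eq_sum_integral_cells hN fun j hj => ?_]
  · refine Finset.sum_congr rfl fun j hj => ?_
    obtain ⟨a, b, hab⟩ := hu.eq_affine_on_cell (Finset.mem_range.mp hj)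
    obtain ⟨c, d, hcd⟩ := hv.eq_affine_on_cell (Finset.mem_range.mp hj)
    rw [integral_mul_of_eq_affine hab hcd (node_le_node_succ hΛ j), node_succ_sub_node]
  · obtain ⟨a, b, hab⟩ := hu.eq_affine_on_cell hj
    obtain ⟨c, d, hcd⟩ := hv.eq_affine_on_cell hj
    exact intervalIntegrable_mul_of_eq_affine hab hcd (node_le_node_succ hΛ j)

lemma IsVh.dInner_sub_integral (hu : IsVh Λ N u) (hv : IsVh Λ N v) (hΛ : 0 ≤ Λ) (hN : N ≠ 0) :
    dInner Λ N u v - ∫ y in (0 : ℝ)..Λ, u y * v y = -∑ j ∈ Finset.range N,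
      (Λ / N / 2 * ((u (node Λ N (j + 1)) - u (node Λ N j)) * v (node Λ N j)
          + (v (node Λ N (j + 1)) - v (node Λ N j)) * u (node Λ N j))
        + Λ / N / 3 * ((u (node Λ N (j + 1)) - u (node Λ N j))
          * (v (node Λ N (j + 1)) - v (node Λ N j)))) := by
  rw [hu.integral_mul hv hΛ hN, dInner, Finset.mul_sum, ← Finset.sum_sub_distrib,
    ← Finset.sum_neg_distrib]
  refine Finset.sum_congr rfl fun j _ => ?_
  simp only [node]
  ring

end FiniteElementSpace

/-- Lemma 1, first estimate: `|δ_h(u_h,v_h)| ≤ C h ‖∂_y u_h‖ ‖∂_y v_h‖`,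
with `C` independent of `u_h`, `v_h` and `h`. -/
theorem quadrature_error_first_estimate (Λ : ℝ) (hΛ : 0 < Λ) :
    ∃ C > 0, ∀ N : ℕ, 0 < N → ∀ u v : ℝ → ℝ, IsVh Λ N u → IsVh Λ N v →
      |dInner Λ N u v - ∫ y in (0:ℝ)..Λ, u y * v y| ≤
        C * (Λ / N) * Real.sqrt (∫ y in (0:ℝ)..Λ, (deriv u y) ^ 2) *
          Real.sqrt (∫ y in (0:ℝ)..Λ, (deriv v y) ^ 2) := by
  refine ⟨4 / 3 * Λ, by positivity, fun N hN u v hu hv => ?_⟩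
  have hN0 : N ≠ 0 := hN.ne'
  have hh : 0 < Λ / N := by positivity
  have hNh : (N : ℝ) * (Λ / N) = Λ := by field_simp
  rw [hu.dInner_sub_integral hv hΛ.le hN0, abs_neg, hu.integral_deriv_sq hΛ.le hN0,
    hv.integral_deriv_sq hΛ.le hN0]
  set Du := ∑ j ∈ Finset.range N, (u (node Λ N (j + 1)) - u (node Λ N j)) ^ 2 / (Λ / N)
  set Dv := ∑ j ∈ Finset.range N, (v (node Λ N (j + 1)) - v (node Λ N j)) ^ 2 / (Λ / N)
  calc _ ≤ 4 / 3 * (Λ / N) * (∑ j ∈ Finset.range N, |u (node Λ N (j + 1)) - u (node Λ N j)|)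
          * ∑ j ∈ Finset.range N, |v (node Λ N (j + 1)) - v (node Λ N j)| :=
        abs_sum_left_rule_error_le (x := fun j => u (node Λ N j)) (z := fun j => v (node Λ N j))
          hh.le (hu.node_self_eq_zero hN0) (hv.node_self_eq_zero hN0)
    _ ≤ 4 / 3 * (Λ / N) * (√(N * (Λ / N)) * √Du) * (√(N * (Λ / N)) * √Dv) := by
        gcongr <;> exact sum_abs_le_sqrt_mul_sqrt _ N hh
    _ = 4 / 3 * Λ * (Λ / N) * √Du * √Dv := by
        rw [hNh]
        linear_combination 4 / 3 * (Λ / N) * √Du * √Dv * Real.mul_self_sqrt hΛ.le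
end
end

section
/- Let u_h, v_h ∈ V_h. Then there is a constant C > 0, independent of u_h, v_h and h, such that the quadrature error satisfies |δ_h(u_h, v_h)| ≤ C √h ‖∂_y u_h‖ ‖v_h‖, where ‖·‖ denotes the L²(0,Λ) norm. (Lemma 1, second estimate.) -/
/-!
Everything reduces to quadratic forms in the nodal values `U j = u (j h)`, `V j = v (j h)`.
On each cell the product of two affine functions is a quadratic, integrated exactly by Simpson's
rule; comparing with the left-endpoint rule and telescoping (using `U N = 0`) gives
`δ_h = h/2 · U₀ V₀ + h/6 · ∑ (U_{j+1} - U_j)(V_{j+1} - V_j)`.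
The boundary term is bounded through `U₀² ≤ Λ ‖u'‖²` (Cauchy–Schwarz on
`U₀ = -∑ (U_{j+1} - U_j)`) and `h V₀² ≤ 6 ‖v‖²` (the first cell alone); the sum through
Cauchy–Schwarz and the inverse inequality `h² ‖v'‖² ≤ 12 ‖v‖²`, which holds cellwise.
-/

open MeasureTheory Set

noncomputable section

theorem integral_affine_mul_affine (a b c d p q : ℝ) :
    ∫ y in p..q, (a * y + b) * (c * y + d) =
      (q - p) / 6 * (2 * (a * p + b) * (c * p + d) + (a * p + b) * (c * q + d) +
        (a * q + b) * (c * p + d) + 2 * (a * q + b) * (c * q + d)) := by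
  have hF : ∀ y, HasDerivAt (fun y => a * c * y ^ 3 / 3 + (a * d + b * c) * y ^ 2 / 2 + b * d * y)
      ((a * y + b) * (c * y + d)) y := by
    intro y
    refine (((((hasDerivAt_pow 3 y).const_mul (a * c)).div_const 3).add
      (((hasDerivAt_pow 2 y).const_mul (a * d + b * c)).div_const 2)).add
      ((hasDerivAt_id y).const_mul (b * d))).congr_deriv ?_
    push_cast
    ring
  rw [intervalIntegral.integral_eq_sub_of_hasDerivAt (fun y _ => hF y)
    ((by fun_prop : Continuous fun y : ℝ => (a * y + b) * (c * y + d)).intervalIntegrable p q)]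
  ring

def AffineOn (f : ℝ → ℝ) (s : Set ℝ) : Prop :=
  ∃ a b : ℝ, ∀ y ∈ s, f y = a * y + b

namespace AffineOn

variable {f g : ℝ → ℝ} {p q : ℝ}

theorem intervalIntegrable_mul (hf : AffineOn f (Icc p q)) (hg : AffineOn g (Icc p q))
    (hpq : p ≤ q) : IntervalIntegrable (fun y => f y * g y) volume p q := by
  obtain ⟨a, b, hf⟩ := hf
  obtain ⟨c, d, hg⟩ := hg
  refine (Continuous.intervalIntegrable (by fun_prop : Continuous
    fun y : ℝ => (a * y + b) * (c * y + d)) p q).congr_uIoo fun y hy => ?_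
  rw [uIoo_of_le hpq] at hy
  simp only [hf y (Ioo_subset_Icc_self hy), hg y (Ioo_subset_Icc_self hy)]

theorem integral_mul (hf : AffineOn f (Icc p q)) (hg : AffineOn g (Icc p q)) (hpq : p ≤ q) :
    ∫ y in p..q, f y * g y =
      (q - p) / 6 * (2 * f p * g p + f p * g q + f q * g p + 2 * f q * g q) := by
  obtain ⟨a, b, hf⟩ := hf
  obtain ⟨c, d, hg⟩ := hg
  have hp : p ∈ Icc p q := left_mem_Icc.mpr hpq
  have hq : q ∈ Icc p q := right_mem_Icc.mpr hpq
  rw [intervalIntegral.integral_congr_Ioo_of_le hpq (g := fun y => (a * y + b) * (c * y + d))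
    fun y hy => by simp only [hf y (Ioo_subset_Icc_self hy), hg y (Ioo_subset_Icc_self hy)],
    integral_affine_mul_affine, hf p hp, hf q hq, hg p hp, hg q hq]

theorem deriv_eq_slope (hf : AffineOn f (Icc p q)) {y : ℝ} (hy : y ∈ Ioo p q) :
    deriv f y = (f q - f p) / (q - p) := by
  obtain ⟨a, b, hf⟩ := hf
  have hpq : p < q := hy.1.trans hy.2
  have hlocal : f =ᶠ[nhds y] fun z => a * z + b :=
    Filter.eventually_of_mem (isOpen_Ioo.mem_nhds hy) fun z hz => hf z (Ioo_subset_Icc_self hz)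
  have hderiv : HasDerivAt (fun z => a * z + b) a y := by
    simpa using ((hasDerivAt_id y).const_mul a).add_const b
  rw [hlocal.deriv_eq, hderiv.deriv, hf p (left_mem_Icc.mpr hpq.le),
    hf q (right_mem_Icc.mpr hpq.le)]
  field_simp [sub_ne_zero.mpr hpq.ne']
  ring

theorem intervalIntegrable_deriv_sq (hf : AffineOn f (Icc p q)) (hpq : p ≤ q) :
    IntervalIntegrable (fun y => deriv f y ^ 2) volume p q :=
  (intervalIntegrable_const (c := ((f q - f p) / (q - p)) ^ 2)).congr_uIoo fun y hy => by
    rw [uIoo_of_le hpq] at hy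
    simp only [hf.deriv_eq_slope hy]

theorem integral_deriv_sq (hf : AffineOn f (Icc p q)) (hpq : p < q) :
    ∫ y in p..q, deriv f y ^ 2 = (f q - f p) ^ 2 / (q - p) := by
  rw [intervalIntegral.integral_congr_Ioo_of_le hpq.le (g := fun _ => ((f q - f p) / (q - p)) ^ 2)
    fun y hy => by simp only [hf.deriv_eq_slope hy], intervalIntegral.integral_const, smul_eq_mul]
  field_simp [sub_ne_zero.mpr hpq.ne']

end AffineOn

open Finset

/-- `massForm N h U V = ∫ U_h V_h` and `stiffnessForm N h U = ‖∂_y U_h‖²` for the piecewise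
linear interpolants `U_h`, `V_h` of nodal values on the grid `j h`, `j ≤ N`. -/
def massForm (N : ℕ) (h : ℝ) (U V : ℕ → ℝ) : ℝ :=
  ∑ j ∈ range N,
    h / 6 * (2 * U j * V j + U j * V (j + 1) + U (j + 1) * V j + 2 * U (j + 1) * V (j + 1))

def stiffnessForm (N : ℕ) (h : ℝ) (U : ℕ → ℝ) : ℝ :=
  (∑ j ∈ range N, (U (j + 1) - U j) ^ 2) / h

section NodalForms

variable {N : ℕ} {h : ℝ} {U V : ℕ → ℝ}

theorem stiffnessForm_nonneg (hh : 0 ≤ h) : 0 ≤ stiffnessForm N h U :=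
  div_nonneg (sum_nonneg fun _ _ => sq_nonneg _) hh

theorem mass_cell_self_nonneg (hh : 0 ≤ h) (a b : ℝ) :
    0 ≤ h / 6 * (2 * a * a + a * b + b * a + 2 * b * b) := by
  nlinarith [mul_nonneg hh (sq_nonneg (a + b)), mul_nonneg hh (sq_nonneg a),
    mul_nonneg hh (sq_nonneg b)]

theorem massForm_self_nonneg (hh : 0 ≤ h) : 0 ≤ massForm N h V V :=
  sum_nonneg fun _ _ => mass_cell_self_nonneg hh _ _

theorem quadrature_sub_massForm (hU : U N = 0) :
    h * ∑ j ∈ range N, U j * V j - massForm N h U V =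
      h / 2 * (U 0 * V 0) + h / 6 * ∑ j ∈ range N, (U (j + 1) - U j) * (V (j + 1) - V j) := by
  have htelescope := sum_range_sub (fun j => U j * V j) N
  simp only [hU, zero_mul] at htelescope
  rw [massForm, mul_sum, mul_sum, ← sum_sub_distrib]
  calc _ = ∑ j ∈ range N, (h / 2 * -(U (j + 1) * V (j + 1) - U j * V j) +
        h / 6 * ((U (j + 1) - U j) * (V (j + 1) - V j))) := sum_congr rfl fun j _ => by ring
    _ = _ := by rw [sum_add_distrib, ← mul_sum, sum_neg_distrib, htelescope]; ring

theorem sq_le_mul_stiffnessForm (hh : 0 < h) (hU : U N = 0) :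
    U 0 ^ 2 ≤ N * h * stiffnessForm N h U := by
  have hU0 : U 0 = -∑ j ∈ range N, (U (j + 1) - U j) := by
    rw [sum_range_sub, hU, zero_sub, neg_neg]
  calc U 0 ^ 2 = (∑ j ∈ range N, (U (j + 1) - U j)) ^ 2 := by rw [hU0, neg_sq]
    _ ≤ N * ∑ j ∈ range N, (U (j + 1) - U j) ^ 2 := by
      simpa using sq_sum_le_card_mul_sum_sq (s := range N) (f := fun j => U (j + 1) - U j)
    _ = N * h * stiffnessForm N h U := by
      rw [stiffnessForm, mul_assoc, mul_div_cancel₀ _ hh.ne']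

theorem mul_sq_le_massForm (hN : 0 < N) (hh : 0 ≤ h) : h * V 0 ^ 2 ≤ 6 * massForm N h V V := by
  have hfirst := single_le_sum (fun j _ => mass_cell_self_nonneg hh (V j) (V (j + 1)))
    (mem_range.mpr hN)
  rw [massForm]
  nlinarith [mul_nonneg hh (sq_nonneg (V 0 + 2 * V 1)), mul_nonneg hh (sq_nonneg (V 1))]

theorem sq_mul_stiffnessForm_le_massForm (hh : 0 < h) :
    h ^ 2 * stiffnessForm N h V ≤ 12 * massForm N h V V := by
  rw [stiffnessForm, massForm, sq, mul_assoc, mul_div_cancel₀ _ hh.ne', mul_sum, mul_sum]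
  exact sum_le_sum fun j _ => by nlinarith [mul_nonneg hh.le (sq_nonneg (V j + V (j + 1)))]

open Real in
theorem abs_quadrature_sub_massForm_le (hN : 0 < N) (hh : 0 < h) (hU : U N = 0) :
    |h * ∑ j ∈ range N, U j * V j - massForm N h U V| ≤
      (√(3 * (N * h) / 2) + √(N * h / 3)) * √h * √(stiffnessForm N h U) *
        √(massForm N h V V) := by
  set A := stiffnessForm N h U
  set B := massForm N h V V
  have hA : 0 ≤ A := stiffnessForm_nonneg hh.le
  have hB : 0 ≤ B := massForm_self_nonneg hh.le
  have hhN : h ≤ N * h := le_mul_of_one_le_left hh.le (Nat.one_le_cast.mpr hN)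
  have hboundary : |h / 2 * (U 0 * V 0)| ≤ √(3 * (N * h) / 2 * (h * (A * B))) := by
    refine abs_le_sqrt ?_
    calc (h / 2 * (U 0 * V 0)) ^ 2 = h / 4 * (U 0 ^ 2 * (h * V 0 ^ 2)) := by ring
      _ ≤ h / 4 * ((N * h * A) * (6 * B)) := by
        gcongr _ * (?_ * ?_)
        · exact sq_le_mul_stiffnessForm hh hU
        · exact mul_sq_le_massForm hN hh.le
      _ = 3 * (N * h) / 2 * (h * (A * B)) := by ring
  have hinterior : |h / 6 * ∑ j ∈ range N, (U (j + 1) - U j) * (V (j + 1) - V j)| ≤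
      √(N * h / 3 * (h * (A * B))) := by
    refine abs_le_sqrt ?_
    have hcs :=
      sum_mul_sq_le_sq_mul_sq (range N) (fun j => U (j + 1) - U j) fun j => V (j + 1) - V j
    rw [← mul_div_cancel₀ (∑ j ∈ range N, (U (j + 1) - U j) ^ 2) hh.ne',
      ← mul_div_cancel₀ (∑ j ∈ range N, (V (j + 1) - V j) ^ 2) hh.ne'] at hcs
    calc _ = h ^ 2 / 36 * (∑ j ∈ range N, (U (j + 1) - U j) * (V (j + 1) - V j)) ^ 2 := by
          ring
      _ ≤ h ^ 2 / 36 * ((h * A) * (h * stiffnessForm N h V)) := by gcongr; exact hcs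
      _ = h / 36 * A * (h * (h ^ 2 * stiffnessForm N h V)) := by ring
      _ ≤ h / 36 * A * (N * h * (12 * B)) := by
        exact mul_le_mul_of_nonneg_left
          (mul_le_mul hhN (sq_mul_stiffnessForm_le_massForm hh)
            (mul_nonneg (sq_nonneg h) (stiffnessForm_nonneg hh.le)) (by positivity))
          (by positivity)
      _ = N * h / 3 * (h * (A * B)) := by ring
  have hsplit : ∀ k, 0 ≤ k → √(k * (h * (A * B))) = √k * √h * √A * √B := fun k hk => by
    rw [sqrt_mul hk, sqrt_mul hh.le, sqrt_mul hA]
    ring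
  rw [quadrature_sub_massForm hU]
  calc _ ≤ _ := abs_add_le _ _
    _ ≤ _ := add_le_add hboundary hinterior
    _ = _ := by rw [hsplit _ (by positivity), hsplit _ (by positivity)]; ring

end NodalForms

section UniformGrid

variable {N : ℕ} {h : ℝ}

theorem integral_eq_sum_cells {f : ℝ → ℝ}
    (hf : ∀ j < N, IntervalIntegrable f volume (j * h) ((j + 1) * h)) :
    ∫ y in 0..N * h, f y = ∑ j ∈ range N, ∫ y in j * h..(j + 1) * h, f y := by
  have := intervalIntegral.sum_integral_adjacent_intervals (a := fun j : ℕ => (j : ℝ) * h)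
    fun j hj => by simpa using hf j hj
  simpa using this.symm

variable {u v : ℝ → ℝ}

theorem integral_mul_eq_massForm (hh : 0 ≤ h)
    (hu : ∀ j < N, AffineOn u (Icc (j * h) ((j + 1) * h)))
    (hv : ∀ j < N, AffineOn v (Icc (j * h) ((j + 1) * h))) :
    ∫ y in 0..N * h, u y * v y = massForm N h (fun j => u (j * h)) fun j => v (j * h) := by
  have hcell : ∀ j : ℕ, (j : ℝ) * h ≤ (j + 1) * h := fun j => by nlinarith
  rw [integral_eq_sum_cells fun j hj => (hu j hj).intervalIntegrable_mul (hv j hj) (hcell j)]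
  refine sum_congr rfl fun j hj => ?_
  rw [(hu j (mem_range.mp hj)).integral_mul (hv j (mem_range.mp hj)) (hcell j)]
  push_cast
  ring

theorem integral_deriv_sq_eq_stiffnessForm (hh : 0 < h)
    (hu : ∀ j < N, AffineOn u (Icc (j * h) ((j + 1) * h))) :
    ∫ y in 0..N * h, deriv u y ^ 2 = stiffnessForm N h fun j => u (j * h) := by
  have hcell : ∀ j : ℕ, (j : ℝ) * h < (j + 1) * h := fun j => by nlinarith
  rw [integral_eq_sum_cells fun j hj => (hu j hj).intervalIntegrable_deriv_sq (hcell j).le,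
    stiffnessForm, sum_div]
  refine sum_congr rfl fun j hj => ?_
  rw [(hu j (mem_range.mp hj)).integral_deriv_sq (hcell j)]
  push_cast
  ring

end UniformGrid

/-- Lemma 1, second estimate: `|δ_h(u_h,v_h)| ≤ C √h ‖∂_y u_h‖ ‖v_h‖`,
with `C` independent of `u_h`, `v_h` and `h`. -/
theorem quadrature_error_second_estimate (Λ : ℝ) (hΛ : 0 < Λ) :
    ∃ C > 0, ∀ N : ℕ, 0 < N → ∀ u v : ℝ → ℝ, IsVh Λ N u → IsVh Λ N v →
      |dInner Λ N u v - ∫ y in (0:ℝ)..Λ, u y * v y| ≤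
        C * Real.sqrt (Λ / N) * Real.sqrt (∫ y in (0:ℝ)..Λ, (deriv u y) ^ 2) *
          Real.sqrt (∫ y in (0:ℝ)..Λ, (v y) ^ 2) := by
  refine ⟨√(3 * Λ / 2) + √(Λ / 3), by positivity, fun N hN u v hu hv => ?_⟩
  have hh : 0 < Λ / N := by positivity
  have hNh : (N : ℝ) * (Λ / N) = Λ := mul_div_cancel₀ _ (by positivity)
  have hU : u (N * (Λ / N)) = 0 := by rw [hNh]; exact hu.2.2
  have huv := integral_mul_eq_massForm hh.le hu.2.1 hv.2.1
  have hdu := integral_deriv_sq_eq_stiffnessForm hh hu.2.1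
  have hvv := integral_mul_eq_massForm hh.le hv.2.1 hv.2.1
  have key := abs_quadrature_sub_massForm_le hN hh (U := fun j => u (j * (Λ / N)))
    (V := fun j => v (j * (Λ / N))) hU
  simp only [← sq, hNh] at huv hdu hvv key
  rwa [dInner, huv, hdu, hvv]
end
end

section
/- Let K_ω > 0 and N a positive integer. If γ_+, γ_− ∈ ℂ are the two roots of γ² − (2 + i/(K_ωN²))γ + 1 = 0, then neither root has modulus 1; since γ_+γ_− = 1, exactly one of the two roots has modulus strictly greater than 1 and the other has modulus strictly less than 1. -/
open Complex

noncomputable section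

/-- A root of modulus one has `γ⁻¹ = conj γ`, so `b = γ + γ⁻¹ = γ + conj γ` would be real. -/
theorem norm_ne_one_of_sq_sub_mul_add_one_eq_zero {b γ : ℂ} (hb : b.im ≠ 0)
    (h : γ ^ 2 - b * γ + 1 = 0) : ‖γ‖ ≠ 1 := by
  intro hγ
  have hγ0 : γ ≠ 0 := norm_ne_zero_iff.mp (by rw [hγ]; exact one_ne_zero)
  have hb_eq : b = γ + γ⁻¹ := by
    field_simp
    linear_combination -h
  have hinv : γ⁻¹ = (starRingEnd ℂ) γ := by
    rw [inv_def, normSq_eq_norm_sq, hγ]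
    simp
  apply hb
  rw [hb_eq, hinv, add_im, conj_im, add_neg_cancel]

theorem mul_eq_of_sq_sub_mul_add_eq_zero {R : Type*} [CommRing R] [IsDomain R] {b c x y : R}
    (hx : x ^ 2 - b * x + c = 0) (hy : y ^ 2 - b * y + c = 0) (hxy : x ≠ y) : x * y = c := by
  have hsum : x + y = b := by
    have hfac : (x - y) * (x + y - b) = 0 := by linear_combination hx - hy
    exact sub_eq_zero.mp ((mul_eq_zero.mp hfac).resolve_left (sub_ne_zero.mpr hxy))
  linear_combination -hx + x * hsum

theorem one_lt_and_lt_one_or_of_mul_eq_one {a c : ℝ} (ha : 0 ≤ a) (h : a * c = 1) (ha1 : a ≠ 1) :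
    (1 < a ∧ c < 1) ∨ (a < 1 ∧ 1 < c) := by
  rcases ha1.lt_or_gt with ha1 | ha1
  · exact Or.inr ⟨ha1, by nlinarith⟩
  · exact Or.inl ⟨ha1, by nlinarith⟩

/-- If `γ_+` and `γ_−` are the two (distinct) roots of
`γ² − (2 + i/(K_ωN²))γ + 1 = 0` with `K_ω > 0`, then neither root has modulus `1`;
since `γ_+γ_− = 1`, exactly one root has modulus `> 1` and the other `< 1`. -/
theorem gamma_roots_moduli (Kω : ℝ) (hKω : 0 < Kω) (N : ℕ) (hN : 0 < N)
    (γp γm : ℂ)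
    (hp : γp ^ 2 - (2 + I / ((Kω : ℂ) * (N : ℂ) ^ 2)) * γp + 1 = 0)
    (hm : γm ^ 2 - (2 + I / ((Kω : ℂ) * (N : ℂ) ^ 2)) * γm + 1 = 0)
    (hne : γp ≠ γm) :
    ‖γp‖ ≠ 1 ∧ ‖γm‖ ≠ 1 ∧ γp * γm = 1 ∧
      ((1 < ‖γp‖ ∧ ‖γm‖ < 1) ∨
        (‖γp‖ < 1 ∧ 1 < ‖γm‖)) := by
  have him : (2 + I / ((Kω : ℂ) * (N : ℂ) ^ 2)).im ≠ 0 := by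
    have hcast : (Kω : ℂ) * (N : ℂ) ^ 2 = ((Kω * (N : ℝ) ^ 2 : ℝ) : ℂ) := by push_cast; rfl
    rw [hcast, add_im, div_ofReal_im, I_im]
    simp [hKω.ne', hN.ne']
  have hp1 := norm_ne_one_of_sq_sub_mul_add_one_eq_zero him hp
  have hprod := mul_eq_of_sq_sub_mul_add_eq_zero hp hm hne
  have hnorm : ‖γp‖ * ‖γm‖ = 1 := by rw [← norm_mul, hprod, norm_one]
  exact ⟨hp1, norm_ne_one_of_sq_sub_mul_add_one_eq_zero him hm, hprod,
    one_lt_and_lt_one_or_of_mul_eq_one (norm_nonneg _) hnorm hp1⟩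
end
end

section
/- Let Λ, K, ω, ε > 0, N a positive integer, h = Λ/N, and K_ω = K/ω. Let γ_+, γ_− ∈ ℂ be the two roots of γ² − (2 + i/(K_ωN²))γ + 1 = 0 and assume γ_+^N ≠ γ_−^N. Define b_d = −(iε/2)/( i/N + N K_ω(1 − z_d) + K_ω ã/(2a₁) ) with z_d = (γ_+^N γ_− − γ_−^N γ_+)/(γ_+^N − γ_−^N), assuming the denominator is nonzero, and α_d = −γ_−^N b_d/(γ_+^N − γ_−^N), β_d = γ_+^N b_d/(γ_+^N − γ_−^N). Then the complex-valued functions ℓ_j(t) = (α_d γ_+^{j−1} + β_d γ_−^{j−1}) e^{iωt}, j = 1,…,N+1, satisfy: (i) ℓ̇_j = Λ²K(ℓ_{j−1} − 2ℓ_j + ℓ_{j+1})/h² for 2 ≤ j ≤ N; (ii) ℓ_{N+1}(t) = 0 for all t; (iii) h ℓ̇₁ = Λ²K(ℓ₂ − ℓ₁)/h − (ΛK ã/(2a₁)) ℓ₁ − (Λ/2) iωε e^{iωt}; and (iv) ℓ₁(t) = b_d e^{iωt}. -/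
/-!
Every `ℓ_j` is a separated solution `u_{j-1} e^{iωt}` with `u_k = α_d γ_+^k + β_d γ_-^k`, so (i)
reduces to the recurrence `K_ω N² (u_k - 2u_{k+1} + u_{k+2}) = i u_{k+1}`, which holds for every
combination of powers of the two roots `γ_±` of the characteristic equation. The coefficients
`α_d, β_d` are chosen so that `u_0 = b_d` and `u_N = 0`, which gives (iv) and (ii); they then force
`u_1 = b_d z_d`, and (iii) becomes the linear equation that defines `b_d`.
-/

open Complex

theorem hasDerivAt_mul_cexp_I_mul (c : ℂ) (ω t : ℝ) :
    HasDerivAt (fun s : ℝ => c * exp (I * ω * s)) (c * (I * ω) * exp (I * ω * t)) t := by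
  have := ((hasDerivAt_id t).ofReal_comp.const_mul (I * ω)).cexp.const_mul c
  simpa [mul_comm, mul_left_comm, mul_assoc] using this

theorem deriv_eq_of_forall_eq_mul_cexp {f : ℝ → ℂ} {c : ℂ} {ω : ℝ}
    (hf : ∀ s : ℝ, f s = c * exp (I * ω * s)) (t : ℝ) :
    deriv f t = c * (I * ω) * exp (I * ω * t) := by
  rw [funext hf]
  exact (hasDerivAt_mul_cexp_I_mul c ω t).deriv

theorem second_diff_add_pow_of_roots {R : Type*} [CommRing R] {γp γm μ : R}
    (hp : γp ^ 2 - (2 + μ) * γp + 1 = 0) (hm : γm ^ 2 - (2 + μ) * γm + 1 = 0)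
    (α β : R) (k : ℕ) :
    (α * γp ^ k + β * γm ^ k) - 2 * (α * γp ^ (k + 1) + β * γm ^ (k + 1)) +
      (α * γp ^ (k + 2) + β * γm ^ (k + 2)) = μ * (α * γp ^ (k + 1) + β * γm ^ (k + 1)) := by
  linear_combination α * γp ^ k * hp + β * γm ^ k * hm

theorem add_pow_of_boundary_coeffs {F : Type*} [Field F] {p q b α β : F} {N : ℕ}
    (hpq : p ^ N ≠ q ^ N)
    (hα : α = -q ^ N * b / (p ^ N - q ^ N)) (hβ : β = p ^ N * b / (p ^ N - q ^ N)) :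
    α + β = b ∧ α * p ^ N + β * q ^ N = 0 ∧
      α * p + β * q = b * ((p ^ N * q - q ^ N * p) / (p ^ N - q ^ N)) := by
  have hD : p ^ N - q ^ N ≠ 0 := sub_ne_zero.mpr hpq
  subst hα hβ
  refine ⟨?_, ?_, ?_⟩ <;> field_simp <;> ring

theorem discrete_periodic_solution_general (Λ K a a1 ω ε : ℝ)
    (hΛ : 0 < Λ) (hK : 0 < K) (hω : 0 < ω)
    (N : ℕ) (hN : 0 < N) (h Kω : ℝ) (hh : h = Λ / N) (hKω : Kω = K / ω)
    (γp γm : ℂ)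
    (hp : γp ^ 2 - (2 + I / ((Kω : ℂ) * (N : ℂ) ^ 2)) * γp + 1 = 0)
    (hm : γm ^ 2 - (2 + I / ((Kω : ℂ) * (N : ℂ) ^ 2)) * γm + 1 = 0)
    (hNe : γp ^ N ≠ γm ^ N)
    (zd bd αd βd : ℂ)
    (hzd : zd = (γp ^ N * γm - γm ^ N * γp) / (γp ^ N - γm ^ N))
    (hden : I / (N : ℂ) + (N : ℂ) * (Kω : ℂ) * (1 - zd) +
      (Kω : ℂ) * (a : ℂ) / (2 * (a1 : ℂ)) ≠ 0)
    (hbd : bd = -(I * (ε : ℂ) / 2) /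
      (I / (N : ℂ) + (N : ℂ) * (Kω : ℂ) * (1 - zd) +
        (Kω : ℂ) * (a : ℂ) / (2 * (a1 : ℂ))))
    (hαd : αd = -γm ^ N * bd / (γp ^ N - γm ^ N))
    (hβd : βd = γp ^ N * bd / (γp ^ N - γm ^ N))
    (ℓ : ℕ → ℝ → ℂ)
    (hℓ : ∀ j : ℕ, 1 ≤ j → j ≤ N + 1 → ∀ t : ℝ,
      ℓ j t = (αd * γp ^ (j - 1) + βd * γm ^ (j - 1)) *
        Complex.exp (I * (ω : ℂ) * (t : ℂ))) :
    (∀ j : ℕ, 2 ≤ j → j ≤ N → ∀ t : ℝ,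
      deriv (ℓ j) t =
        (Λ : ℂ) ^ 2 * (K : ℂ) * (ℓ (j - 1) t - 2 * ℓ j t + ℓ (j + 1) t) / (h : ℂ) ^ 2) ∧
    (∀ t : ℝ, ℓ (N + 1) t = 0) ∧
    (∀ t : ℝ, (h : ℂ) * deriv (ℓ 1) t =
      (Λ : ℂ) ^ 2 * (K : ℂ) * (ℓ 2 t - ℓ 1 t) / (h : ℂ) -
        ((Λ : ℂ) * (K : ℂ) * (a : ℂ) / (2 * (a1 : ℂ))) * ℓ 1 t -
        ((Λ : ℂ) / 2) * (I * (ω : ℂ) * (ε : ℂ) * Complex.exp (I * (ω : ℂ) * (t : ℂ)))) ∧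
    (∀ t : ℝ, ℓ 1 t = bd * Complex.exp (I * (ω : ℂ) * (t : ℂ))) := by
  have hN0 : (N : ℂ) ≠ 0 := by exact_mod_cast hN.ne'
  have hΛ0 : (Λ : ℂ) ≠ 0 := by exact_mod_cast hΛ.ne'
  have hKω0 : (Kω : ℂ) ≠ 0 := by rw [hKω]; exact_mod_cast (div_pos hK hω).ne'
  have hh' : (h : ℂ) = Λ / N := by rw [hh]; push_cast; ring
  have hK' : (K : ℂ) = Kω * ω := by
    rw [hKω]; push_cast; field_simp [show (ω : ℂ) ≠ 0 by exact_mod_cast hω.ne']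
  obtain ⟨hsum, hzero, hfirst⟩ := add_pow_of_boundary_coeffs hNe hαd hβd
  rw [← hzd] at hfirst
  have hℓ' : ∀ k, k + 1 ≤ N + 1 → ∀ t : ℝ,
      ℓ (k + 1) t = (αd * γp ^ k + βd * γm ^ k) * exp (I * ω * t) :=
    fun k hk => hℓ (k + 1) (by omega) hk
  have hℓ1 : ∀ t : ℝ, ℓ 1 t = bd * exp (I * ω * t) := fun t => by
    simpa [hsum] using hℓ' 0 (by omega) t
  refine ⟨fun j hj2 hjN t => ?_, fun t => ?_, fun t => ?_, hℓ1⟩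
  · obtain ⟨k, rfl⟩ : ∃ k, j = k + 1 + 1 := ⟨j - 2, by omega⟩
    have hrec := second_diff_add_pow_of_roots hp hm αd βd k
    rw [Nat.add_sub_cancel, deriv_eq_of_forall_eq_mul_cexp (hℓ' _ (by omega)), hℓ' k (by omega),
      hℓ' (k + 1) (by omega), hℓ' (k + 1 + 1) (by omega), hh', hK']
    field_simp at hrec ⊢
    linear_combination -(ω : ℂ) * hrec
  · simpa [hzero] using hℓ' N le_rfl t
  · have hb : bd * (I / N + N * Kω * (1 - zd) + Kω * (a / (2 * a1))) = -(I * ε / 2) := by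
      rw [← mul_div_assoc, hbd, div_mul_cancel₀ _ hden]
    rw [deriv_eq_of_forall_eq_mul_cexp hℓ1, hℓ' 1 (by omega), hℓ1, pow_one, pow_one,
      hfirst, hh', hK', mul_div_assoc _ (a : ℂ)]
    generalize (a : ℂ) / (2 * a1) = c at hb ⊢
    field_simp at hb ⊢
    linear_combination (ω : ℂ) * hb

/-- The explicit functions `ℓ_j(t) = (α_d γ_+^{j−1} + β_d γ_−^{j−1}) e^{iωt}`
solve the `N`-spring discrete model with periodic forcing `L̇₀(t) = iωε e^{iωt}`:
(i) `ℓ̇_j = Λ²K(ℓ_{j−1} − 2ℓ_j + ℓ_{j+1})/h²` for `2 ≤ j ≤ N`;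
(ii) `ℓ_{N+1} ≡ 0`;
(iii) `h ℓ̇₁ = Λ²K(ℓ₂ − ℓ₁)/h − (ΛK ã/(2a₁)) ℓ₁ − (Λ/2) iωε e^{iωt}`;
(iv) `ℓ₁(t) = b_d e^{iωt}`. -/
theorem discrete_periodic_solution (Λ K a a1 ω ε : ℝ)
    (hΛ : 0 < Λ) (hK : 0 < K) (ha : 0 < a) (ha1 : 0 < a1) (hω : 0 < ω) (hε : 0 < ε)
    (N : ℕ) (hN : 0 < N) (h Kω : ℝ) (hh : h = Λ / N) (hKω : Kω = K / ω)
    (γp γm : ℂ)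
    (hp : γp ^ 2 - (2 + I / ((Kω : ℂ) * (N : ℂ) ^ 2)) * γp + 1 = 0)
    (hm : γm ^ 2 - (2 + I / ((Kω : ℂ) * (N : ℂ) ^ 2)) * γm + 1 = 0)
    (hNe : γp ^ N ≠ γm ^ N)
    (zd bd αd βd : ℂ)
    (hzd : zd = (γp ^ N * γm - γm ^ N * γp) / (γp ^ N - γm ^ N))
    (hden : I / (N : ℂ) + (N : ℂ) * (Kω : ℂ) * (1 - zd) +
      (Kω : ℂ) * (a : ℂ) / (2 * (a1 : ℂ)) ≠ 0)
    (hbd : bd = -(I * (ε : ℂ) / 2) /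
      (I / (N : ℂ) + (N : ℂ) * (Kω : ℂ) * (1 - zd) +
        (Kω : ℂ) * (a : ℂ) / (2 * (a1 : ℂ))))
    (hαd : αd = -γm ^ N * bd / (γp ^ N - γm ^ N))
    (hβd : βd = γp ^ N * bd / (γp ^ N - γm ^ N))
    (ℓ : ℕ → ℝ → ℂ)
    (hℓ : ∀ j : ℕ, 1 ≤ j → j ≤ N + 1 → ∀ t : ℝ,
      ℓ j t = (αd * γp ^ (j - 1) + βd * γm ^ (j - 1)) *
        Complex.exp (I * (ω : ℂ) * (t : ℂ))) :
    (∀ j : ℕ, 2 ≤ j → j ≤ N → ∀ t : ℝ,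
      deriv (ℓ j) t =
        (Λ : ℂ) ^ 2 * (K : ℂ) * (ℓ (j - 1) t - 2 * ℓ j t + ℓ (j + 1) t) / (h : ℂ) ^ 2) ∧
    (∀ t : ℝ, ℓ (N + 1) t = 0) ∧
    (∀ t : ℝ, (h : ℂ) * deriv (ℓ 1) t =
      (Λ : ℂ) ^ 2 * (K : ℂ) * (ℓ 2 t - ℓ 1 t) / (h : ℂ) -
        ((Λ : ℂ) * (K : ℂ) * (a : ℂ) / (2 * (a1 : ℂ))) * ℓ 1 t -
        ((Λ : ℂ) / 2) * (I * (ω : ℂ) * (ε : ℂ) * Complex.exp (I * (ω : ℂ) * (t : ℂ)))) ∧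
    (∀ t : ℝ, ℓ 1 t = bd * Complex.exp (I * (ω : ℂ) * (t : ℂ))) :=
  discrete_periodic_solution_general Λ K a a1 ω ε hΛ hK hω N hN h Kω hh hKω γp γm hp hm hNe zd bd αd
    βd hzd hden hbd hαd hβd ℓ hℓ
end
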